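/- Let (G,X,H) be an uncolorable degree-feasible configuration. Then every hyperedge e of G (an edge with |i_G(e)| ≥ 3) is a bridge of G; consequently ⟨e⟩ (the subhypergraph with vertex set i_G(e) and single edge e) is a block of G, and G has no parallel hyperedges. -/

import Mathlib

open Finset

noncomputable section
open scoped Classical

structure FinHypergraph (α : Type) where
  verts : Finset α
  edges : Finset ℕ
  inc : ℕ → Finset α
  inc_sub : ∀ e ∈ edges, inc e ⊆ verts
  inc_card : ∀ e ∈ edges, 2 ≤ (inc e).card

variable {α β : Type} [DecidableEq α] [DecidableEq β]

namespace FinHypergraph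

def degree (G : FinHypergraph α) (v : α) : ℕ :=
  (G.edges.filter (fun e => v ∈ G.inc e)).card

def maxDegree (G : FinHypergraph α) : ℕ := G.verts.sup G.degree

def mult (G : FinHypergraph α) (u v : α) : ℕ :=
  (G.edges.filter (fun e => G.inc e = {u, v})).card

def Adj (G : FinHypergraph α) (u v : α) : Prop :=
  u ≠ v ∧ ∃ e ∈ G.edges, u ∈ G.inc e ∧ v ∈ G.inc e

def Connected (G : FinHypergraph α) : Prop :=
  ∀ u ∈ G.verts, ∀ v ∈ G.verts, Relation.ReflTransGen G.Adj u v

def IndepSet (H : FinHypergraph β) (S : Finset β) : Prop :=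
  ∀ e ∈ H.edges, ¬ H.inc e ⊆ S

def eraseEdge (H : FinHypergraph β) (e₀ : ℕ) : FinHypergraph β where
  verts := H.verts
  edges := H.edges.erase e₀
  inc := H.inc
  inc_sub := fun e he => H.inc_sub e (Finset.mem_of_mem_erase he)
  inc_card := fun e he => H.inc_card e (Finset.mem_of_mem_erase he)

def induce (G : FinHypergraph α) (S : Finset α) : FinHypergraph α where
  verts := S
  edges := G.edges.filter (fun e => G.inc e ⊆ S)
  inc := G.inc
  inc_sub := fun e he => (Finset.mem_filter.mp he).2
  inc_card := fun e he => G.inc_card e (Finset.mem_filter.mp he).1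

def IsSub (G' G : FinHypergraph α) : Prop :=
  G'.verts ⊆ G.verts ∧ G'.edges ⊆ G.edges ∧ ∀ e ∈ G'.edges, G'.inc e = G.inc e

def shrink (G : FinHypergraph α) (v : α) : FinHypergraph α where
  verts := G.verts.erase v
  edges := G.edges.filter (fun e => 2 ≤ ((G.inc e).erase v).card)
  inc := fun e => (G.inc e).erase v
  inc_sub := by
    intro e he y hy
    rw [Finset.mem_erase] at hy ⊢
    exact ⟨hy.1, G.inc_sub e (Finset.mem_filter.mp he).1 hy.2⟩
  inc_card := fun e he => (Finset.mem_filter.mp he).2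

def nbhd (H : FinHypergraph β) (x : β) : Finset β :=
  H.verts.filter (fun y => ∃ e ∈ H.edges, H.inc e = {x, y})

def numComponents (G : FinHypergraph α) : ℕ :=
  (G.verts.image (fun v => G.verts.filter (fun u => Relation.ReflTransGen G.Adj v u))).card

def IsBridge (G : FinHypergraph α) (e : ℕ) : Prop :=
  numComponents (G.eraseEdge e) = numComponents G + ((G.inc e).card - 1)

def IsSepVertex (G : FinHypergraph α) (v : α) : Prop :=
  ∃ A B : Finset α, A ∪ B = G.verts ∧ A ∩ B = {v} ∧ 2 ≤ A.card ∧ 2 ≤ B.card ∧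
    ∀ e ∈ G.edges, G.inc e ⊆ A ∨ G.inc e ⊆ B

def IsBlock (G : FinHypergraph α) (S : Finset α) : Prop :=
  S ⊆ G.verts ∧ (G.induce S).Connected ∧ (∀ v, ¬ IsSepVertex (G.induce S) v) ∧
    ∀ S' : Finset α, S ⊆ S' → S' ⊆ G.verts → (G.induce S').Connected →
      (∀ v, ¬ IsSepVertex (G.induce S') v) → S' = S

end FinHypergraph

open FinHypergraph

def IsCover (G : FinHypergraph α) (X : α → Finset β) (H : FinHypergraph β) : Prop :=
  (∀ u ∈ G.verts, ∀ v ∈ G.verts, u ≠ v → Disjoint (X u) (X v)) ∧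
  H.verts = G.verts.biUnion X ∧
  (∀ v ∈ G.verts, H.IndepSet (X v)) ∧
  ∃ M : ℕ → Finset ℕ,
    (∀ e ∈ G.edges,
      M e ⊆ H.edges ∧
      (∀ e' ∈ M e, (∀ v ∈ G.inc e, (H.inc e' ∩ X v).card = 1) ∧
        H.inc e' ⊆ (G.inc e).biUnion X) ∧
      ∀ e₁ ∈ M e, ∀ e₂ ∈ M e, e₁ ≠ e₂ → Disjoint (H.inc e₁) (H.inc e₂)) ∧
    H.edges = G.edges.biUnion M

def HasIT (H : FinHypergraph β) (Vs : Finset α) (X : α → Finset β) : Prop :=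
  ∃ T : Finset β, H.IndepSet T ∧ ∀ v ∈ Vs, (T ∩ X v).card = 1

def MinUncol (H : FinHypergraph β) (Vs : Finset α) (X : α → Finset β) : Prop :=
  ¬ HasIT H Vs X ∧ ∀ e ∈ H.edges, HasIT (H.eraseEdge e) Vs X

def DPColorableAt (G : FinHypergraph α) (k : ℕ) : Prop :=
  ∀ (X : α → Finset ℕ) (H : FinHypergraph ℕ),
    IsCover G X H → (∀ v ∈ G.verts, k ≤ (X v).card) → HasIT H G.verts X

def chiDP (G : FinHypergraph α) : ℕ := sInf {k | DPColorableAt G k}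

def DPDegreeColorable (G : FinHypergraph α) : Prop :=
  ∀ (X : α → Finset ℕ) (H : FinHypergraph ℕ),
    IsCover G X H → (∀ v ∈ G.verts, G.degree v ≤ (X v).card) → HasIT H G.verts X

def colNum (G : FinHypergraph α) : ℕ :=
  sInf {k | ∀ G' : FinHypergraph α, G'.IsSub G → G'.verts.Nonempty →
    ∃ v ∈ G'.verts, G'.degree v ≤ k}

def ProperColoring (G : FinHypergraph α) (φ : α → ℕ) : Prop :=
  ∀ e ∈ G.edges, ∃ u ∈ G.inc e, ∃ v ∈ G.inc e, φ u ≠ φ v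

def LColorable (G : FinHypergraph α) (L : α → Finset ℕ) : Prop :=
  ∃ φ : α → ℕ, ProperColoring G φ ∧ ∀ v ∈ G.verts, φ v ∈ L v

def chiList (G : FinHypergraph α) : ℕ :=
  sInf {k | ∀ L : α → Finset ℕ, (∀ v ∈ G.verts, k ≤ (L v).card) → LColorable G L}

def IsTKn (B : FinHypergraph α) (t n : ℕ) : Prop :=
  1 ≤ n ∧ B.verts.card = n ∧ (∀ e ∈ B.edges, (B.inc e).card = 2) ∧
  ∀ u ∈ B.verts, ∀ v ∈ B.verts, u ≠ v → B.mult u v = t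

def IsTCn (B : FinHypergraph α) (t n : ℕ) : Prop :=
  3 ≤ n ∧ B.verts.card = n ∧ (∀ e ∈ B.edges, (B.inc e).card = 2) ∧
  ∃ f : ℕ → α,
    B.verts = (Finset.range n).image f ∧
    (∀ i < n, ∀ j < n, i ≠ j → f i ≠ f j) ∧
    ∀ i < n, ∀ j < n, i ≠ j →
      B.mult (f i) (f j) = if j = (i + 1) % n ∨ i = (j + 1) % n then t else 0

def IsDPHyperbrick (B : FinHypergraph α) : Prop :=
  (∃ t n, 1 ≤ t ∧ 1 ≤ n ∧ IsTKn B t n) ∨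
  (∃ t n, 1 ≤ t ∧ 3 ≤ n ∧ IsTCn B t n) ∨
  (∃ e ∈ B.edges, B.verts = B.inc e ∧ B.edges = {e})

def AdjPair (G : FinHypergraph α) (u v : α) : Prop :=
  u ≠ v ∧ ∃ e ∈ G.edges, G.inc e = {u, v}

def IsKConfig (G : FinHypergraph α) (X : α → Finset β) (H : FinHypergraph β) (t n : ℕ) : Prop :=
  1 ≤ t ∧ 1 ≤ n ∧ IsTKn G t n ∧ IsCover G X H ∧
  ∃ P : α → ℕ → Finset β,
    (∀ v ∈ G.verts, ∀ i ∈ Finset.range (n - 1), ∀ j ∈ Finset.range (n - 1),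
      i ≠ j → Disjoint (P v i) (P v j)) ∧
    (∀ v ∈ G.verts, X v = (Finset.range (n - 1)).biUnion (P v)) ∧
    (∀ v ∈ G.verts, ∀ i ∈ Finset.range (n - 1), (P v i).card = t) ∧
    (∀ i ∈ Finset.range (n - 1), ∀ u ∈ G.verts, ∀ v ∈ G.verts, u ≠ v →
      ∀ x ∈ P u i, ∀ y ∈ P v i, ∃ e ∈ H.edges, H.inc e = {x, y}) ∧
    (∀ e ∈ H.edges, ∃ i ∈ Finset.range (n - 1), ∃ u ∈ G.verts, ∃ v ∈ G.verts,
      u ≠ v ∧ ∃ x ∈ P u i, ∃ y ∈ P v i, H.inc e = {x, y})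

def IsOddCConfig (G : FinHypergraph α) (X : α → Finset β) (H : FinHypergraph β) (t n : ℕ) : Prop :=
  1 ≤ t ∧ 5 ≤ n ∧ Odd n ∧ IsTCn G t n ∧ IsCover G X H ∧
  ∃ P : α → ℕ → Finset β,
    (∀ v ∈ G.verts, Disjoint (P v 0) (P v 1)) ∧
    (∀ v ∈ G.verts, X v = P v 0 ∪ P v 1) ∧
    (∀ v ∈ G.verts, (P v 0).card = t ∧ (P v 1).card = t) ∧
    (∀ i ∈ ({0, 1} : Finset ℕ), ∀ u ∈ G.verts, ∀ v ∈ G.verts, AdjPair G u v →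
      ∀ x ∈ P u i, ∀ y ∈ P v i, ∃ e ∈ H.edges, H.inc e = {x, y}) ∧
    (∀ e ∈ H.edges, ∃ i ∈ ({0, 1} : Finset ℕ), ∃ u ∈ G.verts, ∃ v ∈ G.verts,
      AdjPair G u v ∧ ∃ x ∈ P u i, ∃ y ∈ P v i, H.inc e = {x, y})

def IsEvenCConfig (G : FinHypergraph α) (X : α → Finset β) (H : FinHypergraph β) (t n : ℕ) : Prop :=
  1 ≤ t ∧ 4 ≤ n ∧ Even n ∧ IsTCn G t n ∧ IsCover G X H ∧
  ∃ P : α → ℕ → Finset β, ∃ w w' : α, w ∈ G.verts ∧ w' ∈ G.verts ∧ AdjPair G w w' ∧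
    (∀ v ∈ G.verts, Disjoint (P v 0) (P v 1)) ∧
    (∀ v ∈ G.verts, X v = P v 0 ∪ P v 1) ∧
    (∀ v ∈ G.verts, (P v 0).card = t ∧ (P v 1).card = t) ∧
    (∀ i ∈ ({0, 1} : Finset ℕ), ∀ u ∈ G.verts, ∀ v ∈ G.verts, AdjPair G u v →
      ({u, v} : Finset α) ≠ {w, w'} →
      ∀ x ∈ P u i, ∀ y ∈ P v i, ∃ e ∈ H.edges, H.inc e = {x, y}) ∧
    (∀ x ∈ P w 0, ∀ y ∈ P w' 1, ∃ e ∈ H.edges, H.inc e = {x, y}) ∧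
    (∀ x ∈ P w 1, ∀ y ∈ P w' 0, ∃ e ∈ H.edges, H.inc e = {x, y}) ∧
    (∀ e ∈ H.edges, ∃ x y : β, H.inc e = {x, y} ∧
      ((∃ i ∈ ({0, 1} : Finset ℕ), ∃ u ∈ G.verts, ∃ v ∈ G.verts,
        AdjPair G u v ∧ ({u, v} : Finset α) ≠ {w, w'} ∧ x ∈ P u i ∧ y ∈ P v i) ∨
       (x ∈ P w 0 ∧ y ∈ P w' 1) ∨ (x ∈ P w 1 ∧ y ∈ P w' 0)))

def IsEConfig (G : FinHypergraph α) (X : α → Finset β) (H : FinHypergraph β) : Prop :=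
  (∃ e₀ ∈ G.edges, G.edges = {e₀} ∧ G.verts = G.inc e₀) ∧
  IsCover G X H ∧ (∀ v ∈ G.verts, (X v).card = 1) ∧
  ∃ e₁ ∈ H.edges, H.edges = {e₁} ∧ H.inc e₁ = G.verts.biUnion X

def IsMergeOf (G : FinHypergraph α) (X : α → Finset β) (H : FinHypergraph β)
    (G₁ : FinHypergraph α) (X₁ : α → Finset β) (H₁ : FinHypergraph β)
    (G₂ : FinHypergraph α) (X₂ : α → Finset β) (H₂ : FinHypergraph β)
    (v₁ v₂ vs : α) : Prop :=
  Disjoint G₁.verts G₂.verts ∧ Disjoint G₁.edges G₂.edges ∧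
  Disjoint H₁.verts H₂.verts ∧ Disjoint H₁.edges H₂.edges ∧
  v₁ ∈ G₁.verts ∧ v₂ ∈ G₂.verts ∧ vs ∉ G₁.verts ∪ G₂.verts ∧
  G.verts = insert vs (((G₁.verts ∪ G₂.verts).erase v₁).erase v₂) ∧
  G.edges = G₁.edges ∪ G₂.edges ∧
  (∀ e ∈ G₁.edges, G.inc e =
    if v₁ ∈ G₁.inc e then insert vs ((G₁.inc e).erase v₁) else G₁.inc e) ∧
  (∀ e ∈ G₂.edges, G.inc e =
    if v₂ ∈ G₂.inc e then insert vs ((G₂.inc e).erase v₂) else G₂.inc e) ∧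
  H.verts = H₁.verts ∪ H₂.verts ∧ H.edges = H₁.edges ∪ H₂.edges ∧
  (∀ e ∈ H₁.edges, H.inc e = H₁.inc e) ∧ (∀ e ∈ H₂.edges, H.inc e = H₂.inc e) ∧
  X vs = X₁ v₁ ∪ X₂ v₂ ∧
  (∀ u ∈ G₁.verts.erase v₁, X u = X₁ u) ∧ (∀ u ∈ G₂.verts.erase v₂, X u = X₂ u)

inductive Constructible : FinHypergraph α → (α → Finset β) → FinHypergraph β → Prop where
  | K : ∀ {G : FinHypergraph α} {X : α → Finset β} {H : FinHypergraph β} {t n : ℕ},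
      IsKConfig G X H t n → Constructible G X H
  | Codd : ∀ {G : FinHypergraph α} {X : α → Finset β} {H : FinHypergraph β} {t n : ℕ},
      IsOddCConfig G X H t n → Constructible G X H
  | Ceven : ∀ {G : FinHypergraph α} {X : α → Finset β} {H : FinHypergraph β} {t n : ℕ},
      IsEvenCConfig G X H t n → Constructible G X H
  | E : ∀ {G : FinHypergraph α} {X : α → Finset β} {H : FinHypergraph β},
      IsEConfig G X H → Constructible G X H
  | merge : ∀ {G G₁ G₂ : FinHypergraph α} {X X₁ X₂ : α → Finset β} {H H₁ H₂ : FinHypergraph β}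
      {v₁ v₂ vs : α},
      Constructible G₁ X₁ H₁ → Constructible G₂ X₂ H₂ →
      IsMergeOf G X H G₁ X₁ H₁ G₂ X₂ H₂ v₁ v₂ vs → Constructible G X H

def reducedVerts (G : FinHypergraph α) (X : α → Finset β) (H : FinHypergraph β)
    (v : α) (x : β) : Finset β :=
  (G.shrink v).verts.biUnion (fun u => X u \ H.nbhd x)

def reduceH (G : FinHypergraph α) (X : α → Finset β) (H : FinHypergraph β)
    (v : α) (x : β) : FinHypergraph β where
  verts := reducedVerts G X H v x
  edges := H.edges.filter (fun e =>
    2 ≤ ((H.inc e).erase x).card ∧ (H.inc e).erase x ⊆ reducedVerts G X H v x)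
  inc := fun e => (H.inc e).erase x
  inc_sub := fun e he => (Finset.mem_filter.mp he).2.2
  inc_card := fun e he => (Finset.mem_filter.mp he).2.1


/-!
Suppose two vertices `q ≠ s` of a hyperedge `e` were joined by a path avoiding `e`. Pick a third
vertex `p` of `e` and shrink `e` to the ordinary edge `pq`, and every edge of `H` above `e` to its
trace on `X p ∪ X q`; an independent transversal of the shrunken cover is one of the original
cover. No degree grows, while every vertex of `e` other than `p, q` loses one and so has more
colours than its degree. Every vertex is joined to such a vertex (through `pq` and the path from
`q` to `s` if need be), so greedy colouring, with the vertices of surplus coloured last, succeeds.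
Hence distinct vertices of `e` lie in distinct components of `G - e`: `e` is a bridge, the only
edge inside `i_G(e)`, and `i_G(e)` is a block.
-/

namespace FinHypergraph

instance (G : FinHypergraph α) : Std.Symm G.Adj :=
  ⟨fun _ _ ⟨hne, e, he, hu, hv⟩ => ⟨hne.symm, e, he, hv, hu⟩⟩

lemma exists_mem_inc_reflTransGen_eraseEdge {α : Type} {G : FinHypergraph α} (hG : G.Connected)
    {e : ℕ} (he : e ∈ G.edges) (hne : (G.inc e).Nonempty) {v : α} (hv : v ∈ G.verts) :
    ∃ y ∈ G.inc e, Relation.ReflTransGen (G.eraseEdge e).Adj v y := by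
  obtain ⟨y₀, hy₀⟩ := hne
  induction hG v hv y₀ (G.inc_sub e he hy₀) using Relation.ReflTransGen.head_induction_on with
  | refl => exact ⟨y₀, hy₀, .refl⟩
  | head hvw _ ih =>
    obtain ⟨hne, f, hf, hvf, hwf⟩ := hvw
    by_cases hfe : f = e
    · exact ⟨_, hfe ▸ hvf, .refl⟩
    · obtain ⟨y, hy, hwy⟩ := ih (G.inc_sub f hf hwf)
      exact ⟨y, hy, .head ⟨hne, f, mem_erase.mpr ⟨hfe, hf⟩, hvf, hwf⟩ hwy⟩

def IsSeparatingEdge (G : FinHypergraph α) (e : ℕ) : Prop :=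
  ∀ u ∈ G.inc e, ∀ w ∈ G.inc e, Relation.ReflTransGen (G.eraseEdge e).Adj u w → u = w

lemma numComponents_eq_card {G : FinHypergraph α} {S : Finset α} (hS : S ⊆ G.verts)
    (hreach : ∀ v ∈ G.verts, ∃ s ∈ S, Relation.ReflTransGen G.Adj v s)
    (hsep : ∀ s ∈ S, ∀ t ∈ S, Relation.ReflTransGen G.Adj s t → s = t) :
    G.numComponents = S.card := by
  set comp : α → Finset α := fun v => G.verts.filter (Relation.ReflTransGen G.Adj v)
  have comp_eq {v w : α} (hvw : Relation.ReflTransGen G.Adj v w) : comp v = comp w := by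
    ext u
    simp only [comp, mem_filter]
    exact and_congr_right fun _ => ⟨(symm hvw).trans, hvw.trans⟩
  have himage : G.verts.image comp = S.image comp := by
    ext C
    simp only [mem_image]
    constructor
    · rintro ⟨v, hv, rfl⟩
      obtain ⟨s, hs, hvs⟩ := hreach v hv
      exact ⟨s, hs, (comp_eq hvs).symm⟩
    · rintro ⟨s, hs, rfl⟩
      exact ⟨s, hS hs, rfl⟩
  rw [numComponents, himage]
  refine card_image_of_injOn fun s hs t ht hst => hsep s hs t ht ?_
  have ht' : t ∈ comp t := mem_filter.mpr ⟨hS ht, .refl⟩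
  rw [← hst] at ht'
  exact (mem_filter.mp ht').2

lemma indepSet_empty {β : Type} (H : FinHypergraph β) : H.IndepSet ∅ := fun h hh hsub => by
  have := H.inc_card h hh
  rw [subset_empty.mp hsub, card_empty] at this
  omega

lemma IndepSet.mono {β : Type} {H : FinHypergraph β} {S T : Finset β} 
    (hT : H.IndepSet T) (hST : S ⊆ T) : H.IndepSet S :=
  fun h hh hsub => hT h hh (hsub.trans hST)

section Induce

variable {G : FinHypergraph α}

lemma degree_induce_mono {U V : Finset α} (hUV : U ⊆ V) (v : α) :
    (G.induce U).degree v ≤ (G.induce V).degree v :=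
  card_le_card <| filter_subset_filter _ <| monotone_filter_right _ fun _ _ hf => hf.trans hUV

lemma degree_induce_erase_lt {U : Finset α} {s v : α} {f : ℕ} (hf : f ∈ G.edges)
    (hfU : G.inc f ⊆ U) (hvf : v ∈ G.inc f) (hsf : s ∈ G.inc f) :
    (G.induce (U.erase s)).degree v < (G.induce U).degree v := by
  refine card_lt_card ((ssubset_iff_of_subset ?_).mpr ⟨f, ?_, ?_⟩)
  · exact filter_subset_filter _ <|
      monotone_filter_right _ fun _ _ hg => hg.trans (erase_subset s U)
  · exact mem_filter.mpr ⟨mem_filter.mpr ⟨hf, hfU⟩, hvf⟩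
  · intro hf'
    exact (mem_erase.mp ((mem_filter.mp (mem_filter.mp hf').1).2 hsf)).1 rfl

lemma induce_verts (G : FinHypergraph α) : G.induce G.verts = G := by
  cases G with
  | mk V E inc inc_sub inc_card =>
    simp only [induce, mk.injEq, and_true, true_and]
    exact filter_true_of_mem inc_sub

lemma exists_reflTransGen_induce_erase {c : α → ℕ} {U : Finset α} {s : α}
    (hdeg : ∀ v ∈ U, (G.induce U).degree v ≤ c v) {v t : α} (hv : v ∈ U.erase s)
    (hvt : Relation.ReflTransGen (G.induce U).Adj v t) (ht : (G.induce U).degree t < c t) :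
    ∃ t' ∈ U.erase s, Relation.ReflTransGen (G.induce (U.erase s)).Adj v t' ∧
      (G.induce (U.erase s)).degree t' < c t' := by
  induction hvt using Relation.ReflTransGen.head_induction_on with
  | refl => exact ⟨_, hv, .refl, (degree_induce_mono (erase_subset s U) _).trans_lt ht⟩
  | head hvw _ ih =>
    obtain ⟨hne, f, hf, hvf, hwf⟩ := hvw
    obtain ⟨hfG, hfU⟩ := mem_filter.mp hf
    by_cases hsf : s ∈ G.inc f
    · exact ⟨_, hv, .refl,
        (degree_induce_erase_lt hfG hfU hvf hsf).trans_le (hdeg _ (mem_of_mem_erase hv))⟩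
    · have hfU' : G.inc f ⊆ U.erase s := fun u hu =>
        mem_erase.mpr ⟨fun hus => hsf (hus ▸ hu), hfU hu⟩
      obtain ⟨t', ht', hwt', hdt'⟩ := ih (hfU' hwf)
      exact ⟨t', ht', .head ⟨hne, f, mem_filter.mpr ⟨hfG, hfU'⟩, hvf, hwf⟩ hwt', hdt'⟩

end Induce

end FinHypergraph

lemma HasIT.exists_subset_biUnion {α : Type} {H : FinHypergraph β} {U : Finset α}
    {X : α → Finset β} (hIT : HasIT H U X) :
    ∃ T, H.IndepSet T ∧ T ⊆ U.biUnion X ∧ ∀ v ∈ U, (T ∩ X v).card = 1 := by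
  obtain ⟨T, hT, hTX⟩ := hIT
  refine ⟨T ∩ U.biUnion X, hT.mono inter_subset_left, inter_subset_right, fun v hv => ?_⟩
  rw [inter_right_comm,
    inter_eq_left.mpr (inter_subset_right.trans (subset_biUnion_of_mem X hv))]
  exact hTX v hv

/-- `π h` is the edge of `G` over which the edge `h` of `H` lies: the fibres of `π` are the
matchings `M_e` of the cover. -/
structure IsCoverVia (G : FinHypergraph α) (X : α → Finset β) (H : FinHypergraph β)
    (π : ℕ → ℕ) : Prop where
  disjoint : ∀ u ∈ G.verts, ∀ v ∈ G.verts, u ≠ v → Disjoint (X u) (X v)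
  mem_edges : ∀ h ∈ H.edges, π h ∈ G.edges
  card_inter : ∀ h ∈ H.edges, ∀ v ∈ G.inc (π h), (H.inc h ∩ X v).card = 1
  subset_biUnion : ∀ h ∈ H.edges, H.inc h ⊆ (G.inc (π h)).biUnion X
  disjoint_of_ne : ∀ h ∈ H.edges, ∀ h' ∈ H.edges, π h = π h' → h ≠ h' →
    Disjoint (H.inc h) (H.inc h')

lemma IsCover.exists_isCoverVia {α : Type} {G : FinHypergraph α} {X : α → Finset β}
    {H : FinHypergraph β} (hC : IsCover G X H) : ∃ π, IsCoverVia G X H π := by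
  obtain ⟨hdisj, -, -, M, hM, hHM⟩ := hC
  have hlift : ∀ h ∈ H.edges, ∃ f ∈ G.edges, h ∈ M f := fun h hh => by
    rw [hHM] at hh
    exact mem_biUnion.mp hh
  choose! π hπ hπM using hlift
  refine ⟨π, hdisj, hπ, fun h hh => ((hM _ (hπ h hh)).2.1 h (hπM h hh)).1,
    fun h hh => ((hM _ (hπ h hh)).2.1 h (hπM h hh)).2, fun h hh h' hh' hπh hne => ?_⟩
  exact (hM _ (hπ h hh)).2.2 h (hπM h hh) h' (hπh ▸ hπM h' hh') hne

namespace IsCoverVia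

variable {G : FinHypergraph α} {X : α → Finset β} {H : FinHypergraph β} {π : ℕ → ℕ}

lemma eq_of_mem (hC : IsCoverVia G X H π) {u v : α} (hu : u ∈ G.verts) (hv : v ∈ G.verts)
    {x : β} (hxu : x ∈ X u) (hxv : x ∈ X v) : u = v := by
  by_contra huv
  exact disjoint_left.mp (hC.disjoint u hu v hv huv) hxu hxv

lemma exists_mem_inter {α : Type} {G : FinHypergraph α} {X : α → Finset β}
    {H : FinHypergraph β} {π : ℕ → ℕ} (hC : IsCoverVia G X H π) {h : ℕ}
    (hh : h ∈ H.edges) {v : α} (hv : v ∈ G.inc (π h)) : ∃ y ∈ H.inc h, y ∈ X v := by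
  obtain ⟨y, hy⟩ := card_pos.mp (hC.card_inter h hh v hv ▸ Nat.one_pos)
  exact ⟨y, (mem_inter.mp hy).1, (mem_inter.mp hy).2⟩

lemma eq_of_mem_inter {α : Type} {G : FinHypergraph α} {X : α → Finset β}
    {H : FinHypergraph β} {π : ℕ → ℕ} (hC : IsCoverVia G X H π) {h : ℕ}
    (hh : h ∈ H.edges) {v : α} (hv : v ∈ G.inc (π h)) {y y' : β} (hy : y ∈ H.inc h ∩ X v)
    (hy' : y' ∈ H.inc h ∩ X v) :
    y = y' :=
  card_le_one.mp (hC.card_inter h hh v hv).le y hy y' hy'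

section Extension

variable {U : Finset α} {s : α} {T : Finset β}

lemma mem_of_subset_insert (hC : IsCoverVia G X H π) (hU : U ⊆ G.verts) (hs : s ∈ U)
    (hT : H.IndepSet T) (hTU : T ⊆ (U.erase s).biUnion X) {x : β} (hx : x ∈ X s) {h : ℕ}
    (hh : h ∈ H.edges) (hhT : H.inc h ⊆ insert x T) :
    x ∈ H.inc h ∧ π h ∈ (G.induce U).edges ∧ s ∈ G.inc (π h) := by
  have hxh : x ∈ H.inc h := by
    by_contra hxh
    exact hT h hh fun y hy => (mem_insert.mp (hhT hy)).resolve_left fun hyx => hxh (hyx ▸ hy)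
  have hf := hC.mem_edges h hh
  have hsub : G.inc (π h) ⊆ U := fun v hv => by
    obtain ⟨y, hyh, hyv⟩ := hC.exists_mem_inter hh hv
    have hvV := G.inc_sub _ hf hv
    rcases mem_insert.mp (hhT hyh) with rfl | hyT
    · exact hC.eq_of_mem hvV (hU hs) hyv hx ▸ hs
    · obtain ⟨u, hu, hyu⟩ := mem_biUnion.mp (hTU hyT)
      exact hC.eq_of_mem hvV (hU (mem_of_mem_erase hu)) hyv hyu ▸ mem_of_mem_erase hu
  obtain ⟨v, hv, hxv⟩ := mem_biUnion.mp (hC.subset_biUnion h hh hxh)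
  refine ⟨hxh, mem_filter.mpr ⟨hf, hsub⟩, ?_⟩
  rwa [← hC.eq_of_mem (G.inc_sub _ hf hv) (hU hs) hxv hx]

/-- Above each edge of `G[U]` through `s` at most one colour of `s` is blocked: the edge has a
second vertex `u`, already coloured, and of the matching above the edge only the member through
the colour of `u` can be completed. -/
lemma eq_of_subset_insert (hC : IsCoverVia G X H π) (hU : U ⊆ G.verts) (hs : s ∈ U)
    (hT : H.IndepSet T) (hTU : T ⊆ (U.erase s).biUnion X)
    (hTX : ∀ v ∈ U.erase s, (T ∩ X v).card = 1)
    {x x' : β} (hx : x ∈ X s) (hx' : x' ∈ X s) {h h' : ℕ} (hh : h ∈ H.edges)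
    (hh' : h' ∈ H.edges) (hπ : π h = π h') (hhT : H.inc h ⊆ insert x T)
    (hhT' : H.inc h' ⊆ insert x' T) : x = x' := by
  obtain ⟨hxh, hfU, hsf⟩ := hC.mem_of_subset_insert hU hs hT hTU hx hh hhT
  obtain ⟨hxh', -, -⟩ := hC.mem_of_subset_insert hU hs hT hTU hx' hh' hhT'
  have hf := hC.mem_edges h hh
  obtain ⟨u, hu, hus⟩ := exists_mem_ne (G.inc_card _ hf) s
  have huU : u ∈ U.erase s := mem_erase.mpr ⟨hus, (mem_filter.mp hfU).2 hu⟩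
  have huV := hU (mem_of_mem_erase huU)
  have hcolour {y z : β} {k : ℕ} (hzs : z ∈ X s) (hyk : y ∈ H.inc k)
      (hkT : H.inc k ⊆ insert z T) (hyu : y ∈ X u) : y ∈ T ∩ X u := by
    refine mem_inter.mpr ⟨(mem_insert.mp (hkT hyk)).resolve_left ?_, hyu⟩
    rintro rfl
    exact hus (hC.eq_of_mem huV (hU hs) hyu hzs)
  obtain ⟨y, hyh, hyu⟩ := hC.exists_mem_inter hh hu
  obtain ⟨y', hyh', hyu'⟩ := hC.exists_mem_inter hh' (hπ ▸ hu)
  have hyy' : y = y' := card_le_one.mp (hTX u huU).le y (hcolour hx hyh hhT hyu) y'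
    (hcolour hx' hyh' hhT' hyu')
  have hhh' : h = h' := by
    by_contra hne
    exact disjoint_left.mp (hC.disjoint_of_ne h hh h' hh' hπ hne) hyh (hyy' ▸ hyh')
  subst hhh'
  exact hC.eq_of_mem_inter hh hsf (mem_inter.mpr ⟨hxh, hx⟩) (mem_inter.mpr ⟨hxh', hx'⟩)

lemma card_filter_not_indepSet_insert_le (hC : IsCoverVia G X H π) (hU : U ⊆ G.verts)
    (hs : s ∈ U) (hT : H.IndepSet T) (hTU : T ⊆ (U.erase s).biUnion X)
    (hTX : ∀ v ∈ U.erase s, (T ∩ X v).card = 1) :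
    ((X s).filter fun x => ¬ H.IndepSet (insert x T)).card ≤ (G.induce U).degree s := by
  set blocked : ℕ → Finset β := fun f =>
    (X s).filter fun x => ∃ h ∈ H.edges, π h = f ∧ H.inc h ⊆ insert x T
  have hcover : ((X s).filter fun x => ¬ H.IndepSet (insert x T)) ⊆
      ((G.induce U).edges.filter fun f => s ∈ (G.induce U).inc f).biUnion blocked := by
    intro x hx
    obtain ⟨hxs, hdep⟩ := mem_filter.mp hx
    simp only [IndepSet, not_forall, not_not] at hdep
    obtain ⟨h, hh, hhT⟩ := hdep
    obtain ⟨-, hfU, hsf⟩ := hC.mem_of_subset_insert hU hs hT hTU hxs hh hhT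
    exact mem_biUnion.mpr
      ⟨π h, mem_filter.mpr ⟨hfU, hsf⟩, mem_filter.mpr ⟨hxs, h, hh, rfl, hhT⟩⟩
  refine (card_le_card hcover).trans ((card_biUnion_le_card_mul _ _ 1 ?_).trans_eq (mul_one _))
  intro f _
  refine card_le_one.mpr fun x hx x' hx' => ?_
  obtain ⟨hxs, h, hh, rfl, hhT⟩ := mem_filter.mp hx
  obtain ⟨hxs', h', hh', hπ, hhT'⟩ := mem_filter.mp hx'
  exact hC.eq_of_subset_insert hU hs hT hTU hTX hxs hxs' hh hh' hπ.symm hhT hhT'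

lemma hasIT_insert (hC : IsCoverVia G X H π) (hU : U ⊆ G.verts) (hs : s ∈ U)
    (hT : H.IndepSet T) (hTU : T ⊆ (U.erase s).biUnion X)
    (hTX : ∀ v ∈ U.erase s, (T ∩ X v).card = 1)
    (hdeg : (G.induce U).degree s < (X s).card) : HasIT H U X := by
  obtain ⟨x, hxs, hx⟩ : ∃ x ∈ X s, H.IndepSet (insert x T) := by
    by_contra! hall
    refine (card_filter_not_indepSet_insert_le hC hU hs hT hTU hTX).not_gt (hdeg.trans_le ?_)
    exact card_le_card fun x hx => mem_filter.mpr ⟨hx, hall x hx⟩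
  have hTs : T ∩ X s = ∅ := by
    refine eq_empty_of_forall_notMem fun y hy => ?_
    obtain ⟨u, hu, hyu⟩ := mem_biUnion.mp (hTU (mem_inter.mp hy).1)
    exact (mem_erase.mp hu).1 (hC.eq_of_mem (hU (mem_of_mem_erase hu)) (hU hs) hyu
      (mem_inter.mp hy).2)
  refine ⟨insert x T, hx, fun v hv => ?_⟩
  by_cases hvs : v = s
  · subst hvs
    rw [insert_inter_of_mem hxs, hTs, insert_empty, card_singleton]
  · have hxv : x ∉ X v := fun hxv => hvs (hC.eq_of_mem (hU hv) (hU hs) hxv hxs)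
    rw [insert_inter_of_notMem hxv]
    exact hTX v (mem_erase.mpr ⟨hvs, hv⟩)

end Extension

/-- Greedy colouring, with the vertices of surplus coloured last: peel off a vertex `s` of
surplus, colour `G[U - s]` (whose vertices keep a path to a vertex of surplus, the neighbours of
`s` having gained one), and then colour `s`. -/
lemma hasIT_of_reflTransGen_surplus (hC : IsCoverVia G X H π) {U : Finset α}
    (hU : U ⊆ G.verts) (hdeg : ∀ v ∈ U, (G.induce U).degree v ≤ (X v).card)
    (hreach : ∀ v ∈ U, ∃ t ∈ U, Relation.ReflTransGen (G.induce U).Adj v t ∧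
      (G.induce U).degree t < (X t).card) :
    HasIT H U X := by
  induction U using Finset.strongInduction with
  | H U ih =>
  obtain rfl | ⟨v, hv⟩ := U.eq_empty_or_nonempty
  · exact ⟨∅, H.indepSet_empty, by simp⟩
  obtain ⟨s, hs, -, hds⟩ := hreach v hv
  have hIT : HasIT H (U.erase s) X := by
    refine ih _ (erase_ssubset hs) ((erase_subset s U).trans hU) (fun v hv => ?_)
      (fun v hv => ?_)
    · exact (degree_induce_mono (erase_subset s U) v).trans (hdeg v (mem_of_mem_erase hv))
    · obtain ⟨t, -, hvt, ht⟩ := hreach v (mem_of_mem_erase hv)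
      exact exists_reflTransGen_induce_erase hdeg hv hvt ht
  obtain ⟨T, hT, hTU, hTX⟩ := hIT.exists_subset_biUnion
  exact hC.hasIT_insert hU hs hT hTU hTX hds

lemma hasIT_of_forall_reflTransGen_surplus (hC : IsCoverVia G X H π)
    (hdeg : ∀ v ∈ G.verts, G.degree v ≤ (X v).card)
    (hreach : ∀ v ∈ G.verts, ∃ t ∈ G.verts, Relation.ReflTransGen G.Adj v t ∧
      G.degree t < (X t).card) :
    HasIT H G.verts X := by
  refine hC.hasIT_of_reflTransGen_surplus subset_rfl ?_ ?_ <;> rwa [G.induce_verts]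

end IsCoverVia

namespace FinHypergraph

def restrictEdges (H : FinHypergraph β) (F : Finset ℕ) (Y : Finset β)
    (hY : ∀ h ∈ H.edges, h ∈ F → 2 ≤ (H.inc h ∩ Y).card) : FinHypergraph β where
  verts := H.verts
  edges := H.edges
  inc h := if h ∈ F then H.inc h ∩ Y else H.inc h
  inc_sub h hh := by
    split_ifs
    · exact inter_subset_left.trans (H.inc_sub h hh)
    · exact H.inc_sub h hh
  inc_card h hh := by
    split_ifs with hF
    · exact hY h hh hF
    · exact H.inc_card h hh

section RestrictEdges

variable {H : FinHypergraph β} {F : Finset ℕ} {Y : Finset β}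
  {hY : ∀ h ∈ H.edges, h ∈ F → 2 ≤ (H.inc h ∩ Y).card}

lemma restrictEdges_inc (h : ℕ) :
    (H.restrictEdges F Y hY).inc h = if h ∈ F then H.inc h ∩ Y else H.inc h := rfl

lemma restrictEdges_inc_subset (h : ℕ) : (H.restrictEdges F Y hY).inc h ⊆ H.inc h := by
  rw [restrictEdges_inc]
  split_ifs
  exacts [inter_subset_left, subset_rfl]

lemma restrictEdges_inc_of_mem {h : ℕ} (hF : h ∈ F) :
    (H.restrictEdges F Y hY).inc h = H.inc h ∩ Y :=
  if_pos hF

lemma restrictEdges_inc_of_notMem {h : ℕ} (hF : h ∉ F) :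
    (H.restrictEdges F Y hY).inc h = H.inc h :=
  if_neg hF

lemma IndepSet.of_restrictEdges {T : Finset β} (hT : (H.restrictEdges F Y hY).IndepSet T) :
    H.IndepSet T :=
  fun h hh hsub => hT h hh ((restrictEdges_inc_subset h).trans hsub)

lemma degree_restrictEdges_le (v : β) : (H.restrictEdges F Y hY).degree v ≤ H.degree v :=
  card_le_card <| monotone_filter_right _ fun h _ hv => restrictEdges_inc_subset h hv

lemma degree_restrictEdges_lt {h : ℕ} (hh : h ∈ H.edges) (hF : h ∈ F) {v : β}
    (hv : v ∈ H.inc h) (hvY : v ∉ Y) : (H.restrictEdges F Y hY).degree v < H.degree v := by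
  refine card_lt_card ((ssubset_iff_of_subset ?_).mpr ⟨h, mem_filter.mpr ⟨hh, hv⟩, ?_⟩)
  · exact monotone_filter_right _ fun h _ hv => restrictEdges_inc_subset h hv
  · intro hh'
    have := (mem_filter.mp hh').2
    rw [restrictEdges_inc, if_pos hF] at this
    exact hvY (mem_inter.mp this).2

end RestrictEdges

variable {G : FinHypergraph α} {e : ℕ} {p q : α}

lemma two_le_card_inc_inter_pair (hp : p ∈ G.inc e) (hq : q ∈ G.inc e) (hpq : p ≠ q) :
    ∀ f ∈ G.edges, f ∈ ({e} : Finset ℕ) → 2 ≤ (G.inc f ∩ {p, q}).card := by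
  intro f _ hf
  rw [mem_singleton.mp hf, inter_eq_right.mpr (insert_subset hp (singleton_subset_iff.mpr hq)),
    card_pair hpq]

lemma adj_restrictEdges_of_adj_eraseEdge {Y : Finset α}
    {hY : ∀ f ∈ G.edges, f ∈ ({e} : Finset ℕ) → 2 ≤ (G.inc f ∩ Y).card} {u w : α}
    (huw : (G.eraseEdge e).Adj u w) : (G.restrictEdges {e} Y hY).Adj u w := by
  obtain ⟨hne, f, hf, hu, hw⟩ := huw
  have hfe : f ∉ ({e} : Finset ℕ) := fun h => (mem_erase.mp hf).1 (mem_singleton.mp h)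
  refine ⟨hne, f, mem_of_mem_erase hf, ?_, ?_⟩ <;> rwa [restrictEdges_inc_of_notMem hfe]

end FinHypergraph

lemma HasIT.of_restrictEdges {α : Type} {H : FinHypergraph β} {F : Finset ℕ} {Y : Finset β}
    {hY : ∀ h ∈ H.edges, h ∈ F → 2 ≤ (H.inc h ∩ Y).card} {U : Finset α}
    {X : α → Finset β} (hIT : HasIT (H.restrictEdges F Y hY) U X) : HasIT H U X :=
  let ⟨T, hT, hTX⟩ := hIT
  ⟨T, hT.of_restrictEdges, hTX⟩

namespace IsCoverVia

lemma two_le_card_inc_inter_union {α : Type} {G : FinHypergraph α} {X : α → Finset β}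
    {H : FinHypergraph β} {π : ℕ → ℕ} {e : ℕ} {p q : α} (hC : IsCoverVia G X H π)
    (hp : p ∈ G.inc e) (hq : q ∈ G.inc e) (hpq : p ≠ q) :
    ∀ h ∈ H.edges, h ∈ H.edges.filter (π · = e) →
      2 ≤ (H.inc h ∩ (X p ∪ X q)).card := by
  intro h hh hf
  have hπ := (mem_filter.mp hf).2
  have hf := hC.mem_edges h hh
  rw [inter_union_distrib_left, card_union_of_disjoint, hC.card_inter h hh p (hπ ▸ hp),
    hC.card_inter h hh q (hπ ▸ hq)]
  exact disjoint_of_subset_left inter_subset_right (disjoint_of_subset_right inter_subset_right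
    (hC.disjoint p (G.inc_sub _ hf (hπ ▸ hp)) q (G.inc_sub _ hf (hπ ▸ hq)) hpq))

variable {G : FinHypergraph α} {X : α → Finset β} {H : FinHypergraph β} {π : ℕ → ℕ}
  {e : ℕ} {p q : α}

lemma restrictEdges (hC : IsCoverVia G X H π) (hp : p ∈ G.inc e) (hq : q ∈ G.inc e)
    (hpq : p ≠ q) :
    IsCoverVia (G.restrictEdges {e} {p, q} (two_le_card_inc_inter_pair hp hq hpq)) X
      (H.restrictEdges (H.edges.filter (π · = e)) (X p ∪ X q)
        (hC.two_le_card_inc_inter_union hp hq hpq)) π where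
  disjoint := hC.disjoint
  mem_edges := hC.mem_edges
  card_inter h hh v hv := by
    have hh : h ∈ H.edges := hh
    by_cases hπ : π h = e
    · rw [restrictEdges_inc_of_mem (mem_singleton.mpr hπ)] at hv
      have hvpq : X v ⊆ X p ∪ X q := by
        rcases mem_insert.mp (mem_inter.mp hv).2 with rfl | hv'
        · exact subset_union_left
        · exact (mem_singleton.mp hv') ▸ subset_union_right
      rw [restrictEdges_inc_of_mem (mem_filter.mpr ⟨hh, hπ⟩), inter_assoc,
        inter_eq_right.mpr hvpq]
      exact hC.card_inter h hh v (mem_inter.mp hv).1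
    · rw [restrictEdges_inc_of_notMem (F := {e}) (by simpa using hπ)] at hv
      rw [restrictEdges_inc_of_notMem (by simp [hπ])]
      exact hC.card_inter h hh v hv
  subset_biUnion h hh := by
    have hh : h ∈ H.edges := hh
    by_cases hπ : π h = e
    · rw [restrictEdges_inc_of_mem (mem_singleton.mpr hπ),
        restrictEdges_inc_of_mem (mem_filter.mpr ⟨hh, hπ⟩), hπ,
        inter_eq_right.mpr (insert_subset hp (singleton_subset_iff.mpr hq)),
        biUnion_insert, singleton_biUnion]
      exact inter_subset_right
    · rw [restrictEdges_inc_of_notMem (F := {e}) (by simpa using hπ),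
        restrictEdges_inc_of_notMem (by simp [hπ])]
      exact hC.subset_biUnion h hh
  disjoint_of_ne h hh h' hh' hπ hne :=
    disjoint_of_subset_left (restrictEdges_inc_subset h) <|
      disjoint_of_subset_right (restrictEdges_inc_subset h') (hC.disjoint_of_ne h hh h' hh' hπ hne)

end IsCoverVia

theorem isSeparatingEdge_of_not_hasIT {G : FinHypergraph α} {X : α → Finset β}
    {H : FinHypergraph β} (hG : G.Connected) (hC : IsCover G X H)
    (hdeg : ∀ v ∈ G.verts, G.degree v ≤ (X v).card) (hunc : ¬ HasIT H G.verts X) {e : ℕ}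
    (he : e ∈ G.edges) (h3 : 3 ≤ (G.inc e).card) : G.IsSeparatingEdge e := by
  intro q hq s hs hqs
  by_contra hqs_ne
  obtain ⟨π, hπ⟩ := hC.exists_isCoverVia
  obtain ⟨p, hp, hps⟩ := exists_mem_ne (s := (G.inc e).erase q)
    (by rw [card_erase_of_mem hq]; omega) s
  obtain ⟨hpq, hp⟩ := mem_erase.mp hp
  set G' := G.restrictEdges {e} {p, q} (two_le_card_inc_inter_pair hp hq hpq)
  have hsurplus {y : α} (hy : y ∈ G.inc e) (hyp : y ≠ p) (hyq : y ≠ q) :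
      G'.degree y < (X y).card := by
    refine (degree_restrictEdges_lt he (mem_singleton_self e) hy ?_).trans_le
      (hdeg y (G.inc_sub e he hy))
    simp [hyp, hyq]
  have hlift {u w : α} (huw : Relation.ReflTransGen (G.eraseEdge e).Adj u w) :
      Relation.ReflTransGen G'.Adj u w :=
    Relation.ReflTransGen.mono (fun _ _ => adj_restrictEdges_of_adj_eraseEdge) _ _ huw
  have hpq' : G'.Adj p q := by
    refine ⟨hpq, e, he, ?_, ?_⟩ <;> rw [restrictEdges_inc_of_mem (mem_singleton_self e)] <;>
      simp [hp, hq]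
  have hq_surplus :
      ∃ t ∈ G.verts, Relation.ReflTransGen G'.Adj q t ∧ G'.degree t < (X t).card :=
    ⟨s, G.inc_sub e he hs, hlift hqs, hsurplus hs (Ne.symm hps) (Ne.symm hqs_ne)⟩
  apply hunc
  refine HasIT.of_restrictEdges ((hπ.restrictEdges hp hq hpq).hasIT_of_forall_reflTransGen_surplus
    (fun v hv => (degree_restrictEdges_le v).trans (hdeg v hv)) fun v hv => ?_)
  obtain ⟨y, hy, hvy⟩ := exists_mem_inc_reflTransGen_eraseEdge hG he ⟨q, hq⟩ hv
  obtain ⟨t, ht, hyt, hdt⟩ :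
      ∃ t ∈ G.verts, Relation.ReflTransGen G'.Adj y t ∧ G'.degree t < (X t).card := by
    by_cases hyq : y = q
    · exact hyq ▸ hq_surplus
    by_cases hyp : y = p
    · obtain ⟨t, ht, hqt, hdt⟩ := hq_surplus
      exact ⟨t, ht, hyp ▸ .head hpq' hqt, hdt⟩
    exact ⟨y, G.inc_sub e he hy, .refl, hsurplus hy hyp hyq⟩
  exact ⟨t, ht, (hlift hvy).trans hyt, hdt⟩

namespace FinHypergraph

lemma connected_of_inc_eq_verts {α : Type} {e : ℕ} {K : FinHypergraph α} (he : e ∈ K.edges)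
    (hV : K.inc e = K.verts) : K.Connected := by
  intro u hu w hw
  by_cases huw : u = w
  · exact huw ▸ .refl
  · exact .single ⟨huw, e, he, hV ▸ hu, hV ▸ hw⟩

lemma not_isSepVertex_of_inc_eq_verts {e : ℕ} {K : FinHypergraph α} (he : e ∈ K.edges)
    (hV : K.inc e = K.verts) (v : α) : ¬ K.IsSepVertex v := by
  rintro ⟨A, B, hAB, hinter, hA, hB, hedges⟩
  have hsmall {A B : Finset α} (hAB : A ∪ B = K.verts) (hinter : A ∩ B = {v})
      (heA : K.inc e ⊆ A) : B.card ≤ 1 := by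
    refine (card_le_card fun b hb => ?_).trans_eq (card_singleton v)
    rw [← hinter]
    exact mem_inter.mpr ⟨heA (hV ▸ hAB ▸ mem_union_right A hb), hb⟩
  rcases hedges e he with heA | heB
  · exact absurd (hsmall hAB hinter heA) (by omega)
  · exact absurd (hsmall ((union_comm B A).trans hAB) ((inter_comm B A).trans hinter) heB)
      (by omega)

namespace IsSeparatingEdge

variable {G : FinHypergraph α} {e : ℕ}

lemma induce_inc_edges (hsep : G.IsSeparatingEdge e) (he : e ∈ G.edges) :
    (G.induce (G.inc e)).edges = {e} := by
  ext f
  simp only [induce, mem_filter, mem_singleton]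
  refine ⟨fun ⟨hf, hfe⟩ => ?_, by rintro rfl; exact ⟨he, subset_rfl⟩⟩
  by_contra hne
  obtain ⟨a, ha⟩ := card_pos.mp (zero_lt_two.trans_le (G.inc_card f hf))
  obtain ⟨b, hb, hba⟩ := exists_mem_ne (G.inc_card f hf) a
  exact hba (hsep b (hfe hb) a (hfe ha) (.single ⟨hba, f, mem_erase.mpr ⟨hne, hf⟩, hb, ha⟩))

/-- Any larger vertex set than `inc e` separates at the vertex `v` of `e` through which it is
reached: put the component of `v` in `G - e` on one side and everything else, with `v`, on the
other. -/
lemma exists_isSepVertex_induce (hsep : G.IsSeparatingEdge e) (hG : G.Connected)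
    (he : e ∈ G.edges) {S : Finset α} (hS : G.inc e ⊂ S) (hSV : S ⊆ G.verts) :
    ∃ v, (G.induce S).IsSepVertex v := by
  obtain ⟨y, hyS, hye⟩ := exists_of_ssubset hS
  have hne : (G.inc e).Nonempty := card_pos.mp (zero_lt_two.trans_le (G.inc_card e he))
  obtain ⟨v, hv, hyv⟩ := exists_mem_inc_reflTransGen_eraseEdge hG he hne (hSV hyS)
  set C := G.verts.filter fun t => Relation.ReflTransGen (G.eraseEdge e).Adj t v
  have hCe {t : α} (ht : t ∈ G.inc e) (htC : t ∈ C) : t = v :=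
    hsep t ht v hv (mem_filter.mp htC).2
  have hCf {f : ℕ} (hf : f ∈ G.edges) (hfe : f ≠ e) {a b : α} (ha : a ∈ G.inc f)
      (hb : b ∈ G.inc f) (haC : a ∈ C) : b ∈ C := by
    refine mem_filter.mpr ⟨G.inc_sub f hf hb, ?_⟩
    by_cases hba : b = a
    · exact hba ▸ (mem_filter.mp haC).2
    · exact .head ⟨hba, f, mem_erase.mpr ⟨hfe, hf⟩, hb, ha⟩ (mem_filter.mp haC).2
  have hvS : v ∈ S := hS.subset hv
  have hvC : v ∈ C := mem_filter.mpr ⟨G.inc_sub e he hv, .refl⟩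
  obtain ⟨w, hw, hwv⟩ := exists_mem_ne (G.inc_card e he) v
  refine ⟨v, S.filter (· ∈ C), insert v (S.filter (· ∉ C)), ?_, ?_, ?_, ?_, ?_⟩
  · ext a
    simp only [induce, mem_union, mem_filter, mem_insert]
    by_cases haC : a ∈ C <;> by_cases hav : a = v <;> simp_all
  · ext a
    simp only [mem_inter, mem_filter, mem_insert, mem_singleton]
    by_cases hav : a = v <;> simp_all
  · have hyv' : y ≠ v := fun h => hye (h ▸ hv)
    exact (card_pair hyv').symm.le.trans (card_le_card (insert_subset
      (mem_filter.mpr ⟨hyS, mem_filter.mpr ⟨hSV hyS, hyv⟩⟩)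
      (singleton_subset_iff.mpr (mem_filter.mpr ⟨hvS, hvC⟩))))
  · exact (card_pair hwv).symm.le.trans (card_le_card (insert_subset
      (mem_insert_of_mem (mem_filter.mpr ⟨hS.subset hw, fun hwC => hwv (hCe hw hwC)⟩))
      (singleton_subset_iff.mpr (mem_insert_self v _))))
  · intro f hf
    obtain ⟨hf, hfS⟩ := mem_filter.mp hf
    by_cases hfe : f = e
    · subst hfe
      refine Or.inr fun t ht => ?_
      by_cases htv : t = v
      · rw [htv]
        exact mem_insert_self v _
      · exact mem_insert_of_mem (mem_filter.mpr ⟨hfS ht, fun htC => htv (hCe ht htC)⟩)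
    by_cases hfC : ∃ a ∈ G.inc f, a ∈ C
    · obtain ⟨a, ha, haC⟩ := hfC
      exact Or.inl fun t ht => mem_filter.mpr ⟨hfS ht, hCf hf hfe ha ht haC⟩
    · push Not at hfC
      exact Or.inr fun t ht => mem_insert_of_mem (mem_filter.mpr ⟨hfS ht, hfC t ht⟩)

lemma isBlock_inc (hsep : G.IsSeparatingEdge e) (hG : G.Connected) (he : e ∈ G.edges) :
    G.IsBlock (G.inc e) := by
  have he' : e ∈ (G.induce (G.inc e)).edges := mem_filter.mpr ⟨he, subset_rfl⟩
  refine ⟨G.inc_sub e he, connected_of_inc_eq_verts he' rfl,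
    not_isSepVertex_of_inc_eq_verts he' rfl, fun S hS hSV _ hnosep => ?_⟩
  by_contra hne
  obtain ⟨v, hv⟩ := hsep.exists_isSepVertex_induce hG he (hS.ssubset_of_ne (Ne.symm hne)) hSV
  exact hnosep v hv

lemma isBridge (hsep : G.IsSeparatingEdge e) (hG : G.Connected) (he : e ∈ G.edges) :
    G.IsBridge e := by
  obtain ⟨v, hv⟩ := card_pos.mp (zero_lt_two.trans_le (G.inc_card e he))
  have hvV := G.inc_sub e he hv
  have hG1 : G.numComponents = ({v} : Finset α).card :=
    numComponents_eq_card (singleton_subset_iff.mpr hvV)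
      (fun u hu => ⟨v, mem_singleton_self v, hG u hu v hvV⟩)
      (fun s hs t ht _ => (mem_singleton.mp hs).trans (mem_singleton.mp ht).symm)
  have hGe : (G.eraseEdge e).numComponents = (G.inc e).card :=
    numComponents_eq_card (G.inc_sub e he)
      (fun u hu => exists_mem_inc_reflTransGen_eraseEdge hG he ⟨v, hv⟩ hu) hsep
  rw [IsBridge, hG1, hGe, card_singleton]
  have := G.inc_card e he
  omega

end IsSeparatingEdge

end FinHypergraph

/-- in an uncolorable degree-feasible configuration, every hyperedge
of G is a bridge, ⟨e⟩ is a block, and G has no parallel hyperedges. -/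
theorem uncolorable_hyperedge_bridge (G : FinHypergraph α) (X : α → Finset β) (H : FinHypergraph β)
    (hG : G.Connected) (hC : IsCover G X H)
    (hdf : ∀ v ∈ G.verts, G.degree v ≤ (X v).card)
    (hunc : ¬ HasIT H G.verts X) :
    ∀ e ∈ G.edges, 3 ≤ (G.inc e).card →
      G.IsBridge e ∧ G.IsBlock (G.inc e) ∧ (G.induce (G.inc e)).edges = {e} ∧
      ∀ e' ∈ G.edges, e' ≠ e → G.inc e' ≠ G.inc e := by
  intro e he h3
  have hsep := isSeparatingEdge_of_not_hasIT hG hC hdf hunc he h3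
  have hedges := hsep.induce_inc_edges he
  refine ⟨hsep.isBridge hG he, hsep.isBlock_inc hG he, hedges, fun e' he' hne heq => hne ?_⟩
  have : e' ∈ (G.induce (G.inc e)).edges := mem_filter.mpr ⟨he', heq.le⟩
  rwa [hedges, mem_singleton] at this
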